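/- arXiv:1411.1989 — 7 statements merged into one kernel-verified Lean document; each statement's English description precedes it below -/
import Mathlib

section
/- For every integer q ≥ 2, the series ∑_{n=1}^∞ q^{-⌊√n⌋} converges and its sum equals (3q-1)/(q-1)². -/
private lemma sqrt_key (k i : ℕ) (hi : i ≤ 2*k+2) :
    Nat.sqrt (k*k + 2*k + i + 1) = k + 1 := by
  have h1 : (k+1) ≤ Nat.sqrt (k*k + 2*k + i + 1) := by
    rw [Nat.le_sqrt']; nlinarith
  have h2 : Nat.sqrt (k*k + 2*k + i + 1) < k + 2 := by
    rw [Nat.sqrt_lt']; nlinarith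
  omega

private def sqrtEquiv : (Σ k : ℕ, Fin (2*k+3)) ≃ ℕ where
  toFun p := p.1 * p.1 + 2 * p.1 + p.2
  invFun n := ⟨Nat.sqrt (n+1) - 1, ⟨n + 1 - Nat.sqrt (n+1) * Nat.sqrt (n+1), by
    have hs1 : 1 ≤ Nat.sqrt (n+1) := by
      rw [Nat.le_sqrt']; omega
    have hlt : n + 1 < (Nat.sqrt (n+1) + 1) ^ 2 := Nat.lt_succ_sqrt' (n+1)
    have hle : Nat.sqrt (n+1) ^ 2 ≤ n + 1 := Nat.sqrt_le' (n+1)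
    have e1 : (Nat.sqrt (n+1) + 1)^2 = Nat.sqrt (n+1) * Nat.sqrt (n+1) + 2 * Nat.sqrt (n+1) + 1 := by ring
    have e2 : Nat.sqrt (n+1) ^ 2 = Nat.sqrt (n+1) * Nat.sqrt (n+1) := by ring
    rw [e1] at hlt
    rw [e2] at hle
    generalize Nat.sqrt (n+1) * Nat.sqrt (n+1) = a at *
    omega⟩⟩
  left_inv := by
    rintro ⟨k, i, hi⟩
    have hi' : i ≤ 2*k+2 := by omega
    have hs : Nat.sqrt (k*k + 2*k + i + 1) = k + 1 := sqrt_key k i hi'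
    simp only [hs]
    have h2 : k*k + 2*k + i + 1 - (k+1)*(k+1) = i := by
      have : (k+1)*(k+1) = k*k + 2*k + 1 := by ring
      omega
    congr 1
    · omega
    · rw [Fin.heq_ext_iff (by omega)]
      simp [h2]
  right_inv := by
    intro n
    have hs1 : 1 ≤ Nat.sqrt (n+1) := by rw [Nat.le_sqrt']; omega
    obtain ⟨t, ht⟩ : ∃ t, Nat.sqrt (n+1) = t + 1 := ⟨Nat.sqrt (n+1) - 1, by omega⟩
    have hle : Nat.sqrt (n+1) ^ 2 ≤ n + 1 := Nat.sqrt_le' (n+1)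
    simp only [ht] at hle ⊢
    have e2 : (t+1) ^ 2 = (t+1) * (t+1) := by ring
    rw [e2] at hle
    have e3 : (t+1)*(t+1) = t*t + 2*t + 1 := by ring
    simp only [Nat.add_sub_cancel]
    generalize hq : t*t = a at *
    omega

/-- For every integer `q ≥ 2`, the series `∑_{n=1}^∞ q^{-⌊√n⌋}` converges with sum
`(3q-1)/(q-1)^2`. -/
theorem stmt_0 (q : ℕ) (hq : 2 ≤ q) :
    HasSum (fun n : ℕ => ((1 : ℝ) / q) ^ Nat.sqrt (n + 1))
      ((3 * q - 1) / ((q : ℝ) - 1) ^ 2) := by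
  have hq1 : (1:ℝ) < q := by exact_mod_cast hq.trans_lt' one_lt_two
  have hq0 : (0:ℝ) < q := by linarith
  set x : ℝ := 1 / q with hxdef
  have hx0 : 0 ≤ x := by positivity
  have hx1 : x < 1 := by rw [hxdef, div_lt_one hq0]; exact hq1
  -- geometric series facts
  have hgeom : HasSum (fun k : ℕ => x ^ k) (1 - x)⁻¹ :=
    hasSum_geometric_of_lt_one hx0 hx1
  have hk : HasSum (fun k : ℕ => (k:ℝ) * x ^ k) (x / (1-x)^2) :=
    hasSum_coe_mul_geometric_of_norm_lt_one
      (by rwa [Real.norm_eq_abs, abs_of_nonneg hx0])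
  have hg : HasSum (fun k : ℕ => (2*(k:ℝ)+3) * x ^ (k+1))
      (2*x*(x/(1-x)^2) + 3*x*(1-x)⁻¹) := by
    have h := (hk.mul_left (2*x)).add (hgeom.mul_left (3*x))
    have hfe : (fun k : ℕ => (2*(k:ℝ)+3) * x ^ (k+1))
        = fun k : ℕ => 2*x*((k:ℝ)*x^k) + 3*x*x^k := by
      funext k; ring
    rw [hfe]; exact h
  -- sum value
  have hval : 2*x*(x/(1-x)^2) + 3*x*(1-x)⁻¹ = (3 * q - 1) / ((q : ℝ) - 1) ^ 2 := by
    have hqne : (q:ℝ) ≠ 0 := ne_of_gt hq0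
    have hq1ne : (q:ℝ) - 1 ≠ 0 := by linarith
    have h1x : 1 - x ≠ 0 := by linarith
    rw [hxdef]
    field_simp
    ring
  rw [← hval]
  -- fiberwise sums
  have hfiber : ∀ k : ℕ, HasSum (fun _ : Fin (2*k+3) => x ^ (k+1)) ((2*(k:ℝ)+3) * x ^ (k+1)) := by
    intro k
    have h := hasSum_fintype (fun _ : Fin (2*k+3) => x ^ (k+1))
    simpa [Finset.sum_const, Finset.card_univ, nsmul_eq_mul, Nat.cast_add, Nat.cast_mul] using h
  -- sigma function
  set F : (Σ k : ℕ, Fin (2*k+3)) → ℝ := fun p => x ^ (p.1 + 1) with hF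
  have hFsummable : Summable F := by
    rw [summable_sigma_of_nonneg (fun p => by positivity)]
    constructor
    · intro k; exact (hfiber k).summable
    · have : (fun k : ℕ => ∑' (i : Fin (2*k+3)), F ⟨k, i⟩)
          = fun k : ℕ => (2*(k:ℝ)+3) * x ^ (k+1) := by
        funext k; exact (hfiber k).tsum_eq
      rw [this]; exact hg.summable
  have hFsum : HasSum F (2*x*(x/(1-x)^2) + 3*x*(1-x)⁻¹) :=
    HasSum.sigma_of_hasSum hg (fun k => hfiber k) hFsummable
  -- transfer via the equivalence
  rw [← sqrtEquiv.hasSum_iff]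
  have hcomp : (fun n : ℕ => ((1 : ℝ) / q) ^ Nat.sqrt (n + 1)) ∘ ⇑sqrtEquiv = F := by
    funext p
    obtain ⟨k, i, hi⟩ := p
    simp only [Function.comp_apply, hF, sqrtEquiv]
    rw [← hxdef]
    congr 1
    exact sqrt_key k i (by omega)
  rw [hcomp]
  exact hFsum
end

section
/- Let p, q be integers with p, q ≥ 2, let r : ℕ → ℕ be nondecreasing with r(0) = 0, and define F : ℕ → ℕ by F(0) = F(1) = 1 and F(n) = p·q^{(n-1) - r(n-1)} for n > 1 (assuming r(n-1) ≤ n-1), and define G : ℕ → ℕ by G(0) = G(1) = 1 and G(n) = ∑_{i=1}^{n} F(i)·G(n-i) for n > 1. If 1 + p·∑_{j=1}^∞ q^{-r(j)} ≤ q, then G(n) ≤ q^n for every n ≥ 0. -/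
/-- If `1 + p ∑_{j≥1} q^{-r(j)} ≤ q`, then the number `G n` of good words of length `n`
satisfies `G n ≤ q^n` for every `n`. -/
theorem stmt_3 (p q : ℕ) (hp : 2 ≤ p) (hq : 2 ≤ q)
    (r : ℕ → ℕ) (hr_mono : Monotone r) (hr0 : r 0 = 0) (hr_le : ∀ n, r n ≤ n)
    (F G : ℕ → ℕ)
    (hF0 : F 0 = 1) (hF1 : F 1 = 1)
    (hF : ∀ n, 2 ≤ n → F n = p * q ^ ((n - 1) - r (n - 1)))
    (hG0 : G 0 = 1) (hG1 : G 1 = 1)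
    (hG : ∀ n, 2 ≤ n → G n = ∑ i ∈ Finset.Icc 1 n, F i * G (n - i))
    (hsum : Summable (fun j : ℕ => ((1 : ℝ) / q) ^ r (j + 1)))
    (hcond : 1 + (p : ℝ) * ∑' j : ℕ, ((1 : ℝ) / q) ^ r (j + 1) ≤ q) :
    ∀ n : ℕ, G n ≤ q ^ n := by
  have hqn : 0 < q := by omega
  have hq0 : (0:ℝ) < (q:ℝ) := by exact_mod_cast hqn
  set T : ℝ := ∑' j : ℕ, ((1 : ℝ) / q) ^ r (j + 1) with hT
  have hT0 : 0 ≤ T := tsum_nonneg (fun j => by positivity)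
  intro n
  induction n using Nat.strong_induction_on with
  | _ n ih =>
    match n, ih with
    | 0, _ => simp [hG0]
    | 1, _ => simpa [hG1] using le_trans (by norm_num) hq
    | (m+2), ih =>
      set n := m + 2 with hn
      have hn2 : 2 ≤ n := by omega
      have main : (G n : ℝ) ≤ (q:ℝ)^n := by
        have h1 : (G n : ℝ) = ∑ i ∈ Finset.Icc 1 n, (F i : ℝ) * (G (n-i) : ℝ) := by
          rw [hG n hn2]; push_cast; ring
        have h2 : (G n:ℝ) ≤ ∑ i ∈ Finset.Icc 1 n, (F i : ℝ) * (q:ℝ)^(n-i) := by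
          rw [h1]
          apply Finset.sum_le_sum
          intro i hi
          simp only [Finset.mem_Icc] at hi
          have h := ih (n - i) (by omega)
          have h' : ((G (n-i)):ℝ) ≤ (q:ℝ)^(n-i) := by exact_mod_cast h
          exact mul_le_mul_of_nonneg_left h' (by positivity)
        have hsplit : Finset.Icc 1 n = insert 1 (Finset.Icc 2 n) := by
          ext x; simp only [Finset.mem_Icc, Finset.mem_insert]; omega
        have h3 : ∑ i ∈ Finset.Icc 1 n, (F i:ℝ) * (q:ℝ)^(n-i)
            = (q:ℝ)^(n-1) + ∑ i ∈ Finset.Icc 2 n, (F i:ℝ) * (q:ℝ)^(n-i) := by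
          rw [hsplit, Finset.sum_insert (by simp)]
          simp [hF1]
        have h4 : ∀ i ∈ Finset.Icc 2 n, (F i:ℝ) * (q:ℝ)^(n-i)
            = (p:ℝ) * (q:ℝ)^(n-1) * ((1:ℝ)/q)^(r (i-1)) := by
          intro i hi
          simp only [Finset.mem_Icc] at hi
          rw [hF i hi.1]
          push_cast
          have key : ((q:ℝ))^((i-1)-r (i-1)+(n-i)) = (q:ℝ)^(n-1) * ((q:ℝ)^(r (i-1)))⁻¹ := by
            rw [eq_mul_inv_iff_mul_eq₀ (by positivity), ← pow_add]
            congr 1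
            have := hr_le (i-1)
            omega
          rw [mul_assoc, ← pow_add, key, one_div, inv_pow]
          ring
        have h5 : ∑ i ∈ Finset.Icc 2 n, (F i:ℝ)*(q:ℝ)^(n-i)
            = (p:ℝ) * (q:ℝ)^(n-1) * ∑ j ∈ Finset.range (n-1), ((1:ℝ)/q)^(r (j+1)) := by
          rw [Finset.sum_congr rfl h4, ← Finset.mul_sum]
          congr 1
          rw [← Finset.Ico_add_one_right_eq_Icc, Finset.sum_Ico_eq_sum_range,
            show n + 1 - 2 = n - 1 from by omega]
          apply Finset.sum_congr rfl
          intro j _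
          congr 2
          omega
        have h6 : ∑ j ∈ Finset.range (n-1), ((1:ℝ)/q)^(r (j+1)) ≤ T :=
          Summable.sum_le_tsum _ (fun j _ => by positivity) hsum
        have h7 : (G n:ℝ) ≤ (q:ℝ)^(n-1) * (1 + (p:ℝ) * T) := by
          have := mul_le_mul_of_nonneg_left h6 (by positivity : (0:ℝ) ≤ (p:ℝ) * (q:ℝ)^(n-1))
          calc (G n:ℝ) ≤ _ := h2
            _ = (q:ℝ)^(n-1) + (p:ℝ) * (q:ℝ)^(n-1) * ∑ j ∈ Finset.range (n-1), ((1:ℝ)/q)^(r (j+1)) := by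
                rw [h3, h5]
            _ ≤ (q:ℝ)^(n-1) + (p:ℝ) * (q:ℝ)^(n-1) * T := by nlinarith
            _ = (q:ℝ)^(n-1) * (1 + (p:ℝ) * T) := by ring
        calc (G n:ℝ) ≤ (q:ℝ)^(n-1) * (1 + (p:ℝ) * T) := h7
          _ ≤ (q:ℝ)^(n-1) * (q:ℝ) := mul_le_mul_of_nonneg_left hcond (by positivity)
          _ = (q:ℝ)^n := by rw [← pow_succ, show n - 1 + 1 = n from by omega]
      exact_mod_cast main
end

section
/- Let p, q be integers with p, q ≥ 2, let r : ℕ → ℕ be nondecreasing with r(0) = 0 and r(n) ≤ n, and define G : ℕ → ℕ by G(0) = G(1) = 1 and G(n) = G(n-1) + ∑_{j=1}^{n-1} p·q^{j - r(j)}·G(n-1-j) for n > 1. If 1 + p·∑_{j=1}^∞ q^{-r(j)} > q (including the case where the series diverges), then liminf_{n→∞} (log G(n))/n > log q. -/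
open Filter

private lemma stmt4_geom (K : ℕ) : ∑ j ∈ Finset.Icc 1 K, ((1 : ℝ)/2) ^ j ≤ 1 := by
  have h : ∀ K : ℕ, ∑ j ∈ Finset.Icc 1 K, ((1 : ℝ)/2) ^ j ≤ 1 - (1/2) ^ K := by
    intro K
    induction K with
    | zero => simp
    | succ K ih =>
      rw [← Finset.insert_Icc_right_eq_Icc_add_one (by omega : 1 ≤ K + 1),
        Finset.sum_insert (by simp)]
      have : ((1 : ℝ)/2) ^ (K + 1) = (1/2) ^ K / 2 := by ring
      rw [this]
      nlinarith [ih]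
  have := h K
  nlinarith [pow_nonneg (by norm_num : (0:ℝ) ≤ 1/2) K]

/-- If `1 + p ∑_{j≥1} q^{-r(j)} > q` (i.e. some partial sum already exceeds `q`), then
`liminf (log G n)/n > log q`. -/
theorem stmt_4 (p q : ℕ) (hp : 2 ≤ p) (hq : 2 ≤ q)
    (r : ℕ → ℕ) (hr_mono : Monotone r) (hr0 : r 0 = 0) (hr_le : ∀ n, r n ≤ n)
    (G : ℕ → ℕ)
    (hG0 : G 0 = 1) (hG1 : G 1 = 1)
    (hG : ∀ n, 2 ≤ n → G n = G (n - 1) +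
      ∑ j ∈ Finset.Icc 1 (n - 1), p * q ^ (j - r j) * G (n - 1 - j))
    (hcond : ∃ N : ℕ, (q : ℝ) <
      1 + (p : ℝ) * ∑ j ∈ Finset.Icc 1 (N - 1), ((1 : ℝ) / q) ^ r j) :
    Real.log q < Filter.liminf (fun n : ℕ => Real.log (G n) / n) Filter.atTop := by
  obtain ⟨N, hN⟩ := hcond
  have hqR : (2 : ℝ) ≤ (q : ℝ) := by exact_mod_cast hq
  have hpR : (2 : ℝ) ≤ (p : ℝ) := by exact_mod_cast hp
  have hq0 : (0 : ℝ) < q := by linarith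
  have hN2 : 2 ≤ N := by
    by_contra h
    push_neg at h
    interval_cases N <;> simp_all <;> linarith
  -- G n ≥ 1 for all n
  have hG_pos : ∀ n, 1 ≤ G n := by
    intro n
    induction n using Nat.strong_induction_on with
    | _ n ih =>
      match n with
      | 0 => simp [hG0]
      | 1 => simp [hG1]
      | (m + 2) =>
        rw [hG (m + 2) (by omega)]
        have h1 := ih (m + 1) (by omega)
        exact le_trans h1 (Nat.le_add_right _ _)
  -- the auxiliary function F
  set F : ℝ → ℝ := fun c => 1 + (p : ℝ) *
    ∑ j ∈ Finset.Icc 1 (N - 1), (q : ℝ) ^ (j - r j) * (c⁻¹) ^ j with hF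
  have hterm : ∀ j ∈ Finset.Icc 1 (N - 1),
      (q : ℝ) ^ (j - r j) * ((q : ℝ)⁻¹) ^ j = ((1 : ℝ)/q) ^ r j := by
    intro j _
    have hj : r j ≤ j := hr_le j
    have hqne : (q : ℝ) ≠ 0 := ne_of_gt hq0
    have hexp : (q : ℝ) ^ j = (q : ℝ) ^ (j - r j) * (q : ℝ) ^ r j := by
      rw [← pow_add, Nat.sub_add_cancel hj]
    rw [inv_pow, one_div, inv_pow, hexp, mul_inv, ← mul_assoc,
      mul_inv_cancel₀ (by positivity), one_mul]
  have hFq : (q : ℝ) < F q := by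
    simp only [hF]
    rw [Finset.sum_congr rfl hterm]
    exact hN
  have hFcont : ContinuousAt F q := by
    have houter : Continuous (fun y : ℝ => 1 + (p : ℝ) *
        ∑ j ∈ Finset.Icc 1 (N - 1), (q : ℝ) ^ (j - r j) * y ^ j) := by
      apply continuous_const.add
      apply continuous_const.mul
      apply continuous_finset_sum
      intro j _
      exact continuous_const.mul (continuous_pow j)
    have : F = (fun y : ℝ => 1 + (p : ℝ) *
        ∑ j ∈ Finset.Icc 1 (N - 1), (q : ℝ) ^ (j - r j) * y ^ j) ∘ (fun c => c⁻¹) := by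
      funext c; simp [hF]
    rw [this]
    exact houter.continuousAt.comp (continuousAt_inv₀ (ne_of_gt hq0))
  -- find c > q with c < F c
  obtain ⟨c, hcF, hcq⟩ : ∃ c : ℝ, c < F c ∧ c ∈ Set.Ioi (q : ℝ) := by
    have hev : ∀ᶠ x in nhds (q : ℝ), x < F x :=
      continuousAt_id.eventually_lt hFcont hFq
    have := (hev.filter_mono (nhdsWithin_le_nhds (s := Set.Ioi (q : ℝ)))).and
      self_mem_nhdsWithin
    exact this.exists
  rw [Set.mem_Ioi] at hcq
  have hc0 : (0 : ℝ) < c := by linarith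
  have hc1 : (1 : ℝ) ≤ c := by linarith
  -- key lower bound : c ^ n ≤ c ^ N * G n
  have key : ∀ n : ℕ, c ^ n ≤ c ^ N * (G n : ℝ) := by
    intro n
    induction n using Nat.strong_induction_on with
    | _ n ih =>
      rcases lt_or_ge n N with h | h
      · calc c ^ n ≤ c ^ N := pow_le_pow_right₀ hc1 h.le
          _ ≤ c ^ N * (G n : ℝ) := by
            apply le_mul_of_one_le_right (by positivity)
            exact_mod_cast hG_pos n
      · have hn2 : 2 ≤ n := le_trans hN2 h
        have hsub : Finset.Icc 1 (N - 1) ⊆ Finset.Icc 1 (n - 1) :=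
          Finset.Icc_subset_Icc le_rfl (by omega)
        have step1 : (G (n - 1) : ℝ) + ∑ j ∈ Finset.Icc 1 (N - 1),
            (p : ℝ) * (q : ℝ) ^ (j - r j) * (G (n - 1 - j) : ℝ) ≤ (G n : ℝ) := by
          rw [hG n hn2]
          push_cast
          have hss := Finset.sum_le_sum_of_subset_of_nonneg hsub
            (f := fun j => (p : ℝ) * (q : ℝ) ^ (j - r j) * (G (n - 1 - j) : ℝ))
            (fun j _ _ => by positivity)
          linarith
        have hsplit : ∀ j ∈ Finset.Icc 1 (N - 1),
            (c⁻¹) ^ j * c ^ (n - 1) = c ^ (n - 1 - j) := by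
          intro j hj
          rw [Finset.mem_Icc] at hj
          have hjn : j ≤ n - 1 := by omega
          have : c ^ (n - 1) = c ^ (n - 1 - j) * c ^ j := by
            rw [← pow_add, Nat.sub_add_cancel hjn]
          rw [this, inv_pow]
          field_simp
        calc c ^ n = c * c ^ (n - 1) := by
              rw [← pow_succ']
              congr 1
              omega
          _ ≤ F c * c ^ (n - 1) := by
              apply mul_le_mul_of_nonneg_right hcF.le (by positivity)
          _ = c ^ (n - 1) + ∑ j ∈ Finset.Icc 1 (N - 1),
              (p : ℝ) * (q : ℝ) ^ (j - r j) * c ^ (n - 1 - j) := by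
              have hsum : (p : ℝ) * (∑ j ∈ Finset.Icc 1 (N - 1),
                  (q : ℝ) ^ (j - r j) * (c⁻¹) ^ j) * c ^ (n - 1)
                  = ∑ j ∈ Finset.Icc 1 (N - 1),
                  (p : ℝ) * (q : ℝ) ^ (j - r j) * c ^ (n - 1 - j) := by
                rw [Finset.mul_sum, Finset.sum_mul]
                apply Finset.sum_congr rfl
                intro j hj
                rw [← hsplit j hj]
                ring
              simp only [hF]
              rw [add_mul, one_mul, hsum]
          _ ≤ c ^ N * (G (n - 1) : ℝ) + ∑ j ∈ Finset.Icc 1 (N - 1),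
              (p : ℝ) * (q : ℝ) ^ (j - r j) * (c ^ N * (G (n - 1 - j) : ℝ)) := by
              gcongr with j hj
              · exact ih (n - 1) (by omega)
              · exact ih (n - 1 - j) (by omega)
          _ = c ^ N * ((G (n - 1) : ℝ) + ∑ j ∈ Finset.Icc 1 (N - 1),
              (p : ℝ) * (q : ℝ) ^ (j - r j) * (G (n - 1 - j) : ℝ)) := by
              rw [mul_add, Finset.mul_sum]
              congr 1
              apply Finset.sum_congr rfl
              intro j _
              ring
          _ ≤ c ^ N * (G n : ℝ) := by
              apply mul_le_mul_of_nonneg_left step1 (by positivity)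
  -- upper bound : G n ≤ M ^ n with M = 2 p q
  set M : ℝ := 2 * p * q with hM
  have hM2q : 2 * (q : ℝ) ≤ M := by nlinarith
  have hM1p : 1 + (p : ℝ) ≤ M := by nlinarith
  have hM1 : (1 : ℝ) ≤ M := by nlinarith
  have hub : ∀ n : ℕ, (G n : ℝ) ≤ M ^ n := by
    intro n
    induction n using Nat.strong_induction_on with
    | _ n ih =>
      match n with
      | 0 => simp [hG0]
      | 1 => simpa [hG1] using hM1
      | (m + 2) =>
        rw [hG (m + 2) (by omega)]
        push_cast
        have hstep : ∀ j ∈ Finset.Icc 1 (m + 1),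
            (p : ℝ) * (q : ℝ) ^ (j - r j) * (G (m + 1 - j) : ℝ)
              ≤ (p : ℝ) * ((1/2) ^ j * M ^ (m + 1)) := by
          intro j hj
          rw [Finset.mem_Icc] at hj
          have h1 : (q : ℝ) ^ (j - r j) ≤ (q : ℝ) ^ j :=
            pow_le_pow_right₀ (by linarith) (by omega)
          have h2 : (G (m + 1 - j) : ℝ) ≤ M ^ (m + 1 - j) :=
            ih (m + 1 - j) (by omega)
          have h3 : (q : ℝ) ^ j * M ^ (m + 1 - j) ≤ (1/2) ^ j * M ^ (m + 1) := by
            have hMsplit : M ^ (m + 1) = M ^ j * M ^ (m + 1 - j) := by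
              rw [← pow_add]
              congr 1
              omega
            rw [hMsplit, ← mul_assoc]
            apply mul_le_mul_of_nonneg_right _ (by positivity)
            calc (q : ℝ) ^ j ≤ (M / 2) ^ j := by
                  apply pow_le_pow_left₀ (by positivity)
                  linarith
              _ = (1/2) ^ j * M ^ j := by
                  rw [div_pow, div_pow]
                  ring
          have hp0 : (0 : ℝ) ≤ p := by linarith
          calc (p : ℝ) * (q : ℝ) ^ (j - r j) * (G (m + 1 - j) : ℝ)
              ≤ (p : ℝ) * ((q : ℝ) ^ j * M ^ (m + 1 - j)) := by
                rw [mul_assoc]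
                apply mul_le_mul_of_nonneg_left _ hp0
                apply mul_le_mul h1 h2 (by positivity) (by positivity)
            _ ≤ (p : ℝ) * ((1/2) ^ j * M ^ (m + 1)) :=
                mul_le_mul_of_nonneg_left h3 hp0
        calc (G (m + 1) : ℝ) + ∑ j ∈ Finset.Icc 1 (m + 1),
              (p : ℝ) * (q : ℝ) ^ (j - r j) * (G (m + 1 - j) : ℝ)
            ≤ M ^ (m + 1) + ∑ j ∈ Finset.Icc 1 (m + 1),
              (p : ℝ) * ((1/2) ^ j * M ^ (m + 1)) :=
              add_le_add (ih (m + 1) (by omega)) (Finset.sum_le_sum hstep)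
          _ = M ^ (m + 1) * (1 + p * ∑ j ∈ Finset.Icc 1 (m + 1), (1/2 : ℝ) ^ j) := by
              rw [mul_add, mul_one]
              congr 1
              rw [Finset.mul_sum, Finset.mul_sum]
              exact Finset.sum_congr rfl fun j _ => by ring
          _ ≤ M ^ (m + 1) * (1 + p * 1) := by
              apply mul_le_mul_of_nonneg_left _ (by positivity)
              have := stmt4_geom (m + 1)
              nlinarith
          _ ≤ M ^ (m + 1) * M := by
              apply mul_le_mul_of_nonneg_left _ (by positivity)
              linarith
          _ = M ^ (m + 2) := by ring
  -- from key : log G n ≥ (n - N) log c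
  have hlog_ge : ∀ n : ℕ, ((n : ℝ) - N) * Real.log c ≤ Real.log (G n) := by
    intro n
    have hGn0 : (0 : ℝ) < (G n : ℝ) := by exact_mod_cast hG_pos n
    have h1 : Real.log (c ^ n) ≤ Real.log (c ^ N * (G n : ℝ)) :=
      Real.log_le_log (by positivity) (key n)
    rw [Real.log_pow, Real.log_mul (by positivity) (ne_of_gt hGn0),
      Real.log_pow] at h1
    nlinarith [h1]
  have hlogc_pos : 0 < Real.log c := Real.log_pos (by linarith)
  have hlogqc : Real.log q < Real.log c := Real.log_lt_log hq0 hcq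
  set b : ℝ := (Real.log q + Real.log c) / 2 with hb
  have hbq : Real.log q < b := by rw [hb]; linarith
  have hbc : b < Real.log c := by rw [hb]; linarith
  -- tendsto
  have hten : Tendsto (fun n : ℕ => ((n : ℝ) - N) / n * Real.log c) atTop
      (nhds (Real.log c)) := by
    have h1 : Tendsto (fun n : ℕ => 1 - (N : ℝ) / n) atTop (nhds 1) := by
      have h0 := tendsto_const_div_atTop_nhds_zero_nat (N : ℝ)
      simpa using tendsto_const_nhds.sub h0
    have h2 := h1.mul_const (Real.log c)
    rw [one_mul] at h2
    apply h2.congr'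
    filter_upwards [eventually_ge_atTop 1] with n hn
    have hn0 : (n : ℝ) ≠ 0 := by positivity
    field_simp
  have hev2 : ∀ᶠ n in atTop, b ≤ Real.log (G n) / n := by
    filter_upwards [hten.eventually (eventually_gt_nhds hbc),
      eventually_ge_atTop 1] with n h1 hn1
    have hn0 : (0 : ℝ) < n := by positivity
    calc b ≤ ((n : ℝ) - N) / n * Real.log c := h1.le
      _ = ((n : ℝ) - N) * Real.log c / n := by ring
      _ ≤ Real.log (G n) / n :=
          div_le_div_of_nonneg_right (hlog_ge n) hn0.le
  have hcob : IsCoboundedUnder (· ≥ ·) atTop (fun n : ℕ => Real.log (G n) / n) := by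
    apply isCoboundedUnder_ge_of_le atTop (x := Real.log M)
    intro n
    rcases Nat.eq_zero_or_pos n with h | h
    · simp [h, hG0, Real.log_nonneg hM1]
    · have hn0 : (0 : ℝ) < n := by exact_mod_cast h
      have hGn0 : (0 : ℝ) < (G n : ℝ) := by exact_mod_cast hG_pos n
      rw [div_le_iff₀ hn0]
      calc Real.log (G n) ≤ Real.log (M ^ n) :=
            Real.log_le_log hGn0 (hub n)
        _ = n * Real.log M := by rw [Real.log_pow]
        _ = Real.log M * n := by ring
  exact lt_of_lt_of_le hbq (le_liminf_of_le hcob hev2)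
end

section
/- Let p, q ≥ 2 be integers, r : ℕ → ℕ nondecreasing with r(0) = 0, r(n) ≤ n, and G defined by G(0) = G(1) = 1 and G(n) = G(n-1) + ∑_{j=1}^{n-1} p·q^{j-r(j)}·G(n-1-j) for n > 1. Suppose there exist N ∈ ℕ and a real z > 1 with 1 + ∑_{j=1}^{N-1} p·q^{-r(j)} > q·z^{N+1}. Then G(n) ≥ (qz)^{n-N} for all n ≥ N. -/
/-- Induction step of Lemma 7: if `1 + ∑_{j=1}^{N-1} p q^{-r(j)} > q z^{N+1}` for some
`z > 1`, then `G n ≥ (qz)^{n-N}` for all `n ≥ N`. -/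
theorem stmt_5 (p q : ℕ) (hp : 2 ≤ p) (hq : 2 ≤ q)
    (r : ℕ → ℕ) (hr_mono : Monotone r) (hr0 : r 0 = 0) (hr_le : ∀ n, r n ≤ n)
    (G : ℕ → ℕ)
    (hG0 : G 0 = 1) (hG1 : G 1 = 1)
    (hG : ∀ n, 2 ≤ n → G n = G (n - 1) +
      ∑ j ∈ Finset.Icc 1 (n - 1), p * q ^ (j - r j) * G (n - 1 - j))
    (N : ℕ) (z : ℝ) (hz : 1 < z)
    (hcond : (q : ℝ) * z ^ (N + 1) <
      1 + ∑ j ∈ Finset.Icc 1 (N - 1), (p : ℝ) * ((1 : ℝ) / q) ^ r j) :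
    ∀ n : ℕ, N ≤ n → ((q : ℝ) * z) ^ (n - N) ≤ G n := by
  have hqR : (2:ℝ) ≤ (q:ℝ) := by exact_mod_cast hq
  have hq0 : (0:ℝ) < (q:ℝ) := by linarith
  have hz0 : (0:ℝ) < z := by linarith
  have hqz1 : (1:ℝ) < (q:ℝ) * z := by nlinarith
  have hqz0 : (0:ℝ) < (q:ℝ) * z := by linarith
  -- N ≥ 1
  have hN1 : 1 ≤ N := by
    by_contra h
    push_neg at h
    interval_cases N
    · simp only [Nat.zero_sub, Finset.Icc_eq_empty_of_lt (by norm_num : (0:ℕ) < 1)] at hcond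
      simp at hcond
      nlinarith
  -- G is positive
  have hGpos : ∀ n, 1 ≤ G n := by
    intro n
    induction n using Nat.strong_induction_on with
    | _ n ih =>
      rcases Nat.lt_or_ge n 2 with h | h
      · interval_cases n <;> omega
      · have hrec := hG n h
        have h1 : 1 ≤ G (n - 1) := ih (n - 1) (by omega)
        omega
  -- main claim for all n
  have key : ∀ n, ((q:ℝ) * z) ^ (n - N) ≤ (G n : ℝ) := by
    intro n
    induction n using Nat.strong_induction_on with
    | _ n ih =>
      rcases Nat.lt_or_ge n (N + 1) with hn | hn
      · have h0 : n - N = 0 := by omega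
        rw [h0, pow_zero]
        exact_mod_cast hGpos n
      · have hn2 : 2 ≤ n := by omega
        set A : ℝ := ((q:ℝ) * z) ^ (n - N) with hA
        have hApos : (0:ℝ) < A := pow_pos hqz0 _
        set c : ℝ := (q:ℝ) * z ^ (N + 1) with hc
        have hc0 : (0:ℝ) < c := by positivity
        have hcle : (q:ℝ) * z ≤ c := by
          have : z ≤ z ^ (N + 1) := le_self_pow₀ hz.le (by omega)
          rw [hc]; nlinarith
        -- Step A: A < A/c + ∑ (A/c) * (p * (1/q)^{r j})
        have hstep : A < A / c +
            ∑ j ∈ Finset.Icc 1 (N - 1), (A / c) * ((p:ℝ) * ((1:ℝ)/q) ^ r j) := by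
          have h1 : A = (A / c) * c := by field_simp
          have h2 : (A / c) * c < (A / c) *
              (1 + ∑ j ∈ Finset.Icc 1 (N - 1), (p:ℝ) * ((1:ℝ)/q) ^ r j) :=
            mul_lt_mul_of_pos_left hcond (by positivity)
          calc A = (A / c) * c := h1
            _ < (A / c) * (1 + ∑ j ∈ Finset.Icc 1 (N - 1), (p:ℝ) * ((1:ℝ)/q) ^ r j) := h2
            _ = A / c + ∑ j ∈ Finset.Icc 1 (N - 1), (A / c) * ((p:ℝ) * ((1:ℝ)/q) ^ r j) := by
                rw [mul_add, mul_one, Finset.mul_sum]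
        -- Step B: A/c ≤ (qz)^{(n-1)-N}
        have hB : A / c ≤ ((q:ℝ) * z) ^ (n - 1 - N) := by
          rw [div_le_iff₀ hc0]
          have hsplit : A = ((q:ℝ) * z) ^ (n - 1 - N) * ((q:ℝ) * z) := by
            rw [hA, ← pow_succ]
            congr 1
            omega
          rw [hsplit]
          exact mul_le_mul_of_nonneg_left hcle (by positivity)
        -- Step C: per-term bound
        have hC : ∀ j ∈ Finset.Icc 1 (N - 1),
            (A / c) * ((p:ℝ) * ((1:ℝ)/q) ^ r j) ≤
            (p:ℝ) * (q:ℝ) ^ (j - r j) * ((q:ℝ) * z) ^ (n - 1 - j - N) := by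
          intro j hj
          rw [Finset.mem_Icc] at hj
          obtain ⟨hj1, hjN⟩ := hj
          have hexp : n - N ≤ (n - 1 - j - N) + (j + 1) := by omega
          have hA_le : A ≤ ((q:ℝ) * z) ^ (n - 1 - j - N) * ((q:ℝ) * z) ^ (j + 1) := by
            rw [hA, ← pow_add]
            exact pow_le_pow_right₀ hqz1.le hexp
          have hzj : z ^ (j + 1) ≤ z ^ (N + 1) := pow_le_pow_right₀ hz.le (by omega)
          have hqzj : ((q:ℝ) * z) ^ (j + 1) ≤ (q:ℝ) ^ j * c := by
            rw [mul_pow, hc, pow_succ]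
            calc (q:ℝ) ^ j * (q:ℝ) * z ^ (j + 1) ≤ (q:ℝ) ^ j * (q:ℝ) * z ^ (N + 1) := by
                  have : (0:ℝ) ≤ (q:ℝ) ^ j * (q:ℝ) := by positivity
                  exact mul_le_mul_of_nonneg_left hzj this
              _ = (q:ℝ) ^ j * ((q:ℝ) * z ^ (N + 1)) := by ring
          have hA2 : A ≤ (q:ℝ) ^ j * ((q:ℝ) * z) ^ (n - 1 - j - N) * c := by
            calc A ≤ ((q:ℝ) * z) ^ (n - 1 - j - N) * ((q:ℝ) * z) ^ (j + 1) := hA_le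
              _ ≤ ((q:ℝ) * z) ^ (n - 1 - j - N) * ((q:ℝ) ^ j * c) :=
                  mul_le_mul_of_nonneg_left hqzj (by positivity)
              _ = (q:ℝ) ^ j * ((q:ℝ) * z) ^ (n - 1 - j - N) * c := by ring
          have hqpow : (q:ℝ) ^ j * ((1:ℝ)/q) ^ r j = (q:ℝ) ^ (j - r j) := by
            have h3 : (q:ℝ) ^ (j - r j) * (q:ℝ) ^ (r j) = (q:ℝ) ^ j := by
              rw [← pow_add, Nat.sub_add_cancel (hr_le j)]
            have hqr0 : (q:ℝ) ^ r j ≠ 0 := by positivity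
            rw [div_pow, one_pow]
            field_simp
            linarith [h3]
          rw [div_mul_eq_mul_div, div_le_iff₀ hc0]
          calc A * ((p:ℝ) * ((1:ℝ)/q) ^ r j)
              ≤ ((q:ℝ) ^ j * ((q:ℝ) * z) ^ (n - 1 - j - N) * c) * ((p:ℝ) * ((1:ℝ)/q) ^ r j) := by
                apply mul_le_mul_of_nonneg_right hA2 (by positivity)
            _ = (p:ℝ) * ((q:ℝ) ^ j * ((1:ℝ)/q) ^ r j) * ((q:ℝ) * z) ^ (n - 1 - j - N) * c := by
                ring
            _ = (p:ℝ) * (q:ℝ) ^ (j - r j) * ((q:ℝ) * z) ^ (n - 1 - j - N) * c := by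
                rw [hqpow]
        -- Step D: assemble
        have hGn : (G n : ℝ) = (G (n - 1) : ℝ) +
            ∑ j ∈ Finset.Icc 1 (n - 1), (p:ℝ) * (q:ℝ) ^ (j - r j) * (G (n - 1 - j) : ℝ) := by
          rw [hG n hn2]
          push_cast
          ring
        have hsum1 : ∑ j ∈ Finset.Icc 1 (N - 1), (p:ℝ) * (q:ℝ) ^ (j - r j) * ((q:ℝ)*z) ^ (n - 1 - j - N)
            ≤ ∑ j ∈ Finset.Icc 1 (N - 1), (p:ℝ) * (q:ℝ) ^ (j - r j) * (G (n - 1 - j) : ℝ) := by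
          apply Finset.sum_le_sum
          intro j hj
          rw [Finset.mem_Icc] at hj
          have hlt : n - 1 - j < n := by omega
          exact mul_le_mul_of_nonneg_left (ih _ hlt) (by positivity)
        have hsum2 : ∑ j ∈ Finset.Icc 1 (N - 1), (p:ℝ) * (q:ℝ) ^ (j - r j) * (G (n - 1 - j) : ℝ)
            ≤ ∑ j ∈ Finset.Icc 1 (n - 1), (p:ℝ) * (q:ℝ) ^ (j - r j) * (G (n - 1 - j) : ℝ) := by
          apply Finset.sum_le_sum_of_subset_of_nonneg
          · apply Finset.Icc_subset_Icc_right
            omega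
          · intro j _ _
            positivity
        have hGn1 : ((q:ℝ) * z) ^ (n - 1 - N) ≤ (G (n - 1) : ℝ) := ih (n - 1) (by omega)
        have hsumC : ∑ j ∈ Finset.Icc 1 (N - 1), (A / c) * ((p:ℝ) * ((1:ℝ)/q) ^ r j)
            ≤ ∑ j ∈ Finset.Icc 1 (N - 1), (p:ℝ) * (q:ℝ) ^ (j - r j) * ((q:ℝ)*z) ^ (n - 1 - j - N) :=
          Finset.sum_le_sum hC
        rw [hGn]
        have := hstep
        linarith
  intro n _
  exact key n
end

section
/- Let p, q ≥ 2 be integers, N ∈ ℕ, z > 1 a real number, and r : ℕ → ℕ. If 1 + ∑_{j=1}^{N-1} p·q^{-r(j)} ≥ q·z^{N+1}, then 1 + ∑_{j=1}^{N-1} z^{-j}·p·q^{-r(j)} ≥ q·z. -/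
/-- If `1 + ∑_{j=1}^{N-1} p q^{-r(j)} ≥ q z^{N+1}` with `z > 1`, then
`1 + ∑_{j=1}^{N-1} z^{-j} p q^{-r(j)} ≥ q z`. -/
theorem stmt_6 (p q : ℕ) (hp : 2 ≤ p) (hq : 2 ≤ q)
    (N : ℕ) (z : ℝ) (hz : 1 < z) (r : ℕ → ℕ)
    (hcond : (q : ℝ) * z ^ (N + 1) ≤
      1 + ∑ j ∈ Finset.Icc 1 (N - 1), (p : ℝ) * ((1 : ℝ) / q) ^ r j) :
    (q : ℝ) * z ≤
      1 + ∑ j ∈ Finset.Icc 1 (N - 1), ((1 : ℝ) / z) ^ j * (p : ℝ) * ((1 : ℝ) / q) ^ r j := by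
  have hz0 : (0 : ℝ) < z := lt_trans one_pos hz
  have hinv0 : (0 : ℝ) ≤ 1 / z := by positivity
  have hinv1 : (1 : ℝ) / z ≤ 1 := by
    rw [div_le_one hz0]; linarith
  have hqpos : (0 : ℝ) < (q : ℝ) := by exact_mod_cast lt_of_lt_of_le two_pos hq
  have hsum : ((1:ℝ)/z) ^ N * ∑ j ∈ Finset.Icc 1 (N - 1), (p : ℝ) * ((1 : ℝ) / q) ^ r j ≤
      ∑ j ∈ Finset.Icc 1 (N - 1), ((1 : ℝ) / z) ^ j * (p : ℝ) * ((1 : ℝ) / q) ^ r j := by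
    rw [Finset.mul_sum]
    apply Finset.sum_le_sum
    intro j hj
    have hjN : j ≤ N := le_trans (Finset.mem_Icc.mp hj).2 (Nat.sub_le N 1)
    have h1 : ((1:ℝ)/z) ^ N ≤ ((1:ℝ)/z) ^ j := pow_le_pow_of_le_one hinv0 hinv1 hjN
    have h2 : (0:ℝ) ≤ (p : ℝ) * ((1 : ℝ) / q) ^ r j := by positivity
    calc ((1:ℝ)/z) ^ N * ((p : ℝ) * ((1 : ℝ) / q) ^ r j)
        ≤ ((1:ℝ)/z) ^ j * ((p : ℝ) * ((1 : ℝ) / q) ^ r j) := by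
          exact mul_le_mul_of_nonneg_right h1 h2
      _ = ((1:ℝ)/z) ^ j * (p : ℝ) * ((1 : ℝ) / q) ^ r j := by ring
  have hzN : (0:ℝ) < z ^ N := by positivity
  have hkey : ((1:ℝ)/z) ^ N * z ^ (N + 1) = z := by
    rw [div_pow, one_pow, pow_succ]
    field_simp
  have hle1 : ((1:ℝ)/z) ^ N ≤ 1 := pow_le_one₀ hinv0 hinv1
  have hge0 : (0:ℝ) ≤ ((1:ℝ)/z) ^ N := by positivity
  nlinarith [mul_le_mul_of_nonneg_left hcond hge0]
end

section
/- Let p, q ≥ 2 be integers, r : ℕ → ℕ nondecreasing with r(0)=0 and r(n) ≤ n, satisfying 1 + p·∑_{j=1}^∞ q^{-r(j)} ≤ q. Define G as in the recurrence G(0)=G(1)=1, G(n)=G(n-1)+∑_{j=1}^{n-1} p·q^{j-r(j)}·G(n-1-j), and define B(n) = 1 + p·q^n + G(n) + ∑_{i=1}^{n-1}(1 + p·q^i)·G(n-i) for n ≥ 2. Then q^n ≤ B(n) ≤ 1 + n·(p+1)·q^n for all n ≥ 2, and consequently lim_{n→∞} (log B(n))/n = log q. -/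
open Filter

/-- Under condition (1), the number `B n` of allowed words of length `n` in `X_R`
satisfies `q^n ≤ B n ≤ 1 + n(p+1)q^n`, hence `(log B n)/n → log q`. -/
theorem stmt_7 (p q : ℕ) (hp : 2 ≤ p) (hq : 2 ≤ q)
    (r : ℕ → ℕ) (hr_mono : Monotone r) (hr0 : r 0 = 0) (hr_le : ∀ n, r n ≤ n)
    (hsum : Summable (fun j : ℕ => ((1 : ℝ) / q) ^ r (j + 1)))
    (hcond : 1 + (p : ℝ) * ∑' j : ℕ, ((1 : ℝ) / q) ^ r (j + 1) ≤ q)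
    (G : ℕ → ℕ)
    (hG0 : G 0 = 1) (hG1 : G 1 = 1)
    (hG : ∀ n, 2 ≤ n → G n = G (n - 1) +
      ∑ j ∈ Finset.Icc 1 (n - 1), p * q ^ (j - r j) * G (n - 1 - j))
    (B : ℕ → ℕ)
    (hB : ∀ n, 2 ≤ n → B n = 1 + p * q ^ n + G n +
      ∑ i ∈ Finset.Icc 1 (n - 1), (1 + p * q ^ i) * G (n - i)) :
    (∀ n, 2 ≤ n → q ^ n ≤ B n ∧ B n ≤ 1 + n * (p + 1) * q ^ n) ∧
      Filter.Tendsto (fun n : ℕ => Real.log (B n) / n) Filter.atTop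
        (nhds (Real.log q)) := by
  have hq0 : (0:ℝ) < (q:ℝ) := by positivity
  have hqne : (q:ℝ) ≠ 0 := ne_of_gt hq0
  have hq1 : (1:ℝ) ≤ (q:ℝ) := by exact_mod_cast Nat.one_le_of_lt hq
  -- key lemma : G n ≤ q ^ n (in ℝ)
  have hGle : ∀ n, (G n : ℝ) ≤ (q:ℝ) ^ n := by
    intro n
    induction n using Nat.strong_induction_on with
    | _ n ih =>
      match n with
      | 0 => simp [hG0]
      | 1 => simpa [hG1] using hq1
      | (m+2) =>
        have hrec := hG (m+2) (by omega)
        rw [hrec]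
        push_cast
        have hterm : ∀ j ∈ Finset.Icc 1 (m+1),
            (p:ℝ) * (q:ℝ) ^ (j - r j) * (G (m+1-j) : ℝ)
              ≤ (p:ℝ) * (q:ℝ) ^ (m+1) * ((1:ℝ)/q) ^ (r j) := by
          intro j hj
          simp only [Finset.mem_Icc] at hj
          have hGj : (G (m+1-j) : ℝ) ≤ (q:ℝ) ^ (m+1-j) := ih _ (by omega)
          have hpow : (q:ℝ) ^ (j - r j) * (q:ℝ) ^ (m+1-j)
              = (q:ℝ) ^ (m+1) * ((1:ℝ)/q) ^ (r j) := by
            rw [← pow_add]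
            have hrj : r j ≤ j := hr_le j
            have heq : j - r j + (m+1-j) = m+1 - r j := by omega
            rw [heq, pow_sub₀ _ hqne (by omega : r j ≤ m+1), one_div, inv_pow]

          calc (p:ℝ) * (q:ℝ) ^ (j - r j) * (G (m+1-j) : ℝ)
              ≤ (p:ℝ) * (q:ℝ) ^ (j - r j) * (q:ℝ) ^ (m+1-j) := by
                apply mul_le_mul_of_nonneg_left hGj
                positivity
            _ = (p:ℝ) * ((q:ℝ) ^ (m+1) * ((1:ℝ)/q) ^ (r j)) := by
                rw [mul_assoc, hpow]
            _ = (p:ℝ) * (q:ℝ) ^ (m+1) * ((1:ℝ)/q) ^ (r j) := by ring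
        have hpart : ∑ j ∈ Finset.Icc 1 (m+1), ((1:ℝ)/q) ^ (r j)
            ≤ ∑' j : ℕ, ((1:ℝ)/q) ^ (r (j+1)) := by
          rw [← Finset.Ico_add_one_right_eq_Icc, Finset.sum_Ico_eq_sum_range]
          calc ∑ i ∈ Finset.range (m+1), ((1:ℝ)/q) ^ (r (1+i))
              = ∑ i ∈ Finset.range (m+1), ((1:ℝ)/q) ^ (r (i+1)) := by
                apply Finset.sum_congr rfl; intro i _; rw [add_comm]
            _ ≤ ∑' j : ℕ, ((1:ℝ)/q) ^ (r (j+1)) :=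
                Summable.sum_le_tsum _ (fun i _ => by positivity) hsum
        calc (G (m+1) : ℝ) + ∑ j ∈ Finset.Icc 1 (m+1),
              (p:ℝ) * (q:ℝ) ^ (j - r j) * (G (m+1-j) : ℝ)
            ≤ (q:ℝ) ^ (m+1) + ∑ j ∈ Finset.Icc 1 (m+1),
              (p:ℝ) * (q:ℝ) ^ (m+1) * ((1:ℝ)/q) ^ (r j) :=
              add_le_add (ih (m+1) (by omega)) (Finset.sum_le_sum hterm)
          _ = (q:ℝ) ^ (m+1) * (1 + (p:ℝ) * ∑ j ∈ Finset.Icc 1 (m+1),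
                ((1:ℝ)/q) ^ (r j)) := by
              rw [Finset.mul_sum, mul_add, mul_one, Finset.mul_sum]
              congr 1
              apply Finset.sum_congr rfl; intro j _; ring
          _ ≤ (q:ℝ) ^ (m+1) * (q:ℝ) := by
              apply mul_le_mul_of_nonneg_left _ (by positivity)
              calc (1:ℝ) + (p:ℝ) * ∑ j ∈ Finset.Icc 1 (m+1), ((1:ℝ)/q) ^ (r j)
                  ≤ 1 + (p:ℝ) * ∑' j : ℕ, ((1:ℝ)/q) ^ (r (j+1)) := by
                    have hp0 : (0:ℝ) ≤ (p:ℝ) := by positivity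
                    nlinarith [hpart]
                _ ≤ (q:ℝ) := hcond
          _ = (q:ℝ) ^ (m+2) := by rw [← pow_succ]
  have hGleN : ∀ n, G n ≤ q ^ n := by
    intro n
    exact_mod_cast hGle n
  -- bounds on B
  have hBlb : ∀ n, 2 ≤ n → q ^ n ≤ B n := by
    intro n hn
    rw [hB n hn]
    have h1 : q ^ n ≤ p * q ^ n := Nat.le_mul_of_pos_left _ (by omega)
    calc q ^ n ≤ p * q ^ n := h1
      _ ≤ 1 + p * q ^ n := Nat.le_add_left _ 1
      _ ≤ 1 + p * q ^ n + G n := Nat.le_add_right _ _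
      _ ≤ _ := Nat.le_add_right _ _
  have hBub : ∀ n, 2 ≤ n → B n ≤ 1 + n * (p + 1) * q ^ n := by
    intro n hn
    rw [hB n hn]
    have hsum' : ∑ i ∈ Finset.Icc 1 (n-1), (1 + p * q ^ i) * G (n - i)
        ≤ (n-1) * ((p+1) * q ^ n) := by
      calc ∑ i ∈ Finset.Icc 1 (n-1), (1 + p * q ^ i) * G (n - i)
          ≤ ∑ _i ∈ Finset.Icc 1 (n-1), (p+1) * q ^ n := by
            apply Finset.sum_le_sum
            intro i hi
            simp only [Finset.mem_Icc] at hi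
            have h1 : G (n-i) ≤ q ^ (n-i) := hGleN _
            have h2 : q ^ i * q ^ (n-i) = q ^ n := by
              rw [← pow_add]; congr 1; omega
            calc (1 + p * q ^ i) * G (n - i) ≤ (1 + p * q ^ i) * q ^ (n-i) :=
                  Nat.mul_le_mul_left _ h1
              _ = q ^ (n-i) + p * (q ^ i * q ^ (n-i)) := by ring
              _ = q ^ (n-i) + p * q ^ n := by rw [h2]
              _ ≤ q ^ n + p * q ^ n := by
                  have : q ^ (n-i) ≤ q ^ n := Nat.pow_le_pow_right (by omega) (by omega)
                  omega
              _ = (p+1) * q ^ n := by ring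
        _ = (n-1) * ((p+1) * q ^ n) := by
            have hc : n - 1 + 1 - 1 = n - 1 := by omega
            rw [Finset.sum_const, Nat.card_Icc, hc, smul_eq_mul]
    have hG' : G n ≤ q ^ n := hGleN n
    have hkey : 1 + p * q ^ n + q ^ n + (n-1) * ((p+1) * q ^ n)
        = 1 + n * (p + 1) * q ^ n := by
      obtain ⟨k, rfl⟩ : ∃ k, n = k + 2 := ⟨n - 2, by omega⟩
      have h1 : k + 2 - 1 = k + 1 := rfl
      rw [h1]
      ring
    calc 1 + p * q ^ n + G n + ∑ i ∈ Finset.Icc 1 (n-1), (1 + p * q ^ i) * G (n - i)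
        ≤ 1 + p * q ^ n + q ^ n + (n-1) * ((p+1) * q ^ n) :=
          Nat.add_le_add (Nat.add_le_add_left hG' _) hsum'
      _ = 1 + n * (p + 1) * q ^ n := hkey
  refine ⟨fun n hn => ⟨hBlb n hn, hBub n hn⟩, ?_⟩
  -- the limit
  have t1 : Tendsto (fun n:ℕ => Real.log ((p:ℝ)+2) / n) atTop (nhds 0) :=
    tendsto_const_div_atTop_nhds_zero_nat _
  have t2 : Tendsto (fun n:ℕ => Real.log n / n) atTop (nhds 0) :=
    Real.isLittleO_log_id_atTop.tendsto_div_nhds_zero.comp tendsto_natCast_atTop_atTop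
  have hupper : Tendsto (fun n:ℕ => Real.log (q:ℝ) + Real.log ((p:ℝ)+2) / n
      + Real.log n / n) atTop (nhds (Real.log q)) := by
    have h := (tendsto_const_nhds (x := Real.log (q:ℝ)) (f := atTop)).add (t1.add t2)
    simp only [add_zero] at h
    convert h using 2 with n
    ring
  apply tendsto_of_tendsto_of_tendsto_of_le_of_le' tendsto_const_nhds hupper
  · -- lower bound eventually
    filter_upwards [eventually_ge_atTop 2] with n hn
    have hnpos : (0:ℝ) < (n:ℝ) := by positivity
    have hlb : (q:ℝ) ^ n ≤ (B n : ℝ) := by exact_mod_cast hBlb n hn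
    have hqn : (0:ℝ) < (q:ℝ) ^ n := by positivity
    rw [le_div_iff₀ hnpos]
    calc Real.log (q:ℝ) * n = n * Real.log (q:ℝ) := by ring
      _ = Real.log ((q:ℝ) ^ n) := by rw [Real.log_pow]
      _ ≤ Real.log (B n : ℝ) := Real.log_le_log hqn hlb
  · -- upper bound eventually
    filter_upwards [eventually_ge_atTop 2] with n hn
    have hnpos : (0:ℝ) < (n:ℝ) := by positivity
    have hnne : (n:ℝ) ≠ 0 := ne_of_gt hnpos
    have hqn : (0:ℝ) < (q:ℝ) ^ n := by positivity
    have hBpos : (0:ℝ) < (B n : ℝ) :=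
      lt_of_lt_of_le hqn (by exact_mod_cast hBlb n hn)
    have hub1 : (B n : ℝ) ≤ 1 + (n:ℝ) * ((p:ℝ)+1) * (q:ℝ) ^ n := by
      exact_mod_cast hBub n hn
    have hub2 : (B n : ℝ) ≤ (n:ℝ) * ((p:ℝ)+2) * (q:ℝ) ^ n := by
      have h1 : (1:ℝ) ≤ (n:ℝ) := by exact_mod_cast Nat.one_le_of_lt hn
      have h2 : (1:ℝ) ≤ (q:ℝ) ^ n := by
        calc (1:ℝ) = 1 ^ n := (one_pow n).symm
          _ ≤ (q:ℝ) ^ n := pow_le_pow_left₀ zero_le_one hq1 n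
      nlinarith
    have hlog : Real.log (B n : ℝ) ≤ Real.log ((n:ℝ) * ((p:ℝ)+2) * (q:ℝ) ^ n) :=
      Real.log_le_log hBpos hub2
    have hexp : Real.log ((n:ℝ) * ((p:ℝ)+2) * (q:ℝ) ^ n)
        = Real.log n + Real.log ((p:ℝ)+2) + n * Real.log q := by
      rw [Real.log_mul (by positivity) (by positivity),
        Real.log_mul (by positivity) (by positivity), Real.log_pow]
    calc Real.log (B n : ℝ) / n ≤ (Real.log n + Real.log ((p:ℝ)+2) + n * Real.log q) / n := by
          rw [← hexp]; gcongr
      _ = Real.log (q:ℝ) + Real.log ((p:ℝ)+2) / n + Real.log n / n := by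
          field_simp
          ring
end

section
/- Let m ≥ 2 and k ≥ 1 be integers and let 𝒰 be a finite cover of a set Y with fewer than (m/(m-1))^{n} elements, for some n ≥ 1. Suppose we have m^n points z_ξ ∈ Y indexed by functions ξ : {0,…,n-1} → {1,…,m}, with ξ ↦ z_ξ injective. Then there exists a member V ∈ 𝒰, an index 0 ≤ j < n, and functions ξ^{(1)}, …, ξ^{(m)} with z_{ξ^{(s)}} ∈ V for all s, such that {ξ^{(1)}(j), …, ξ^{(m)}(j)} = {1,…,m}. -/
lemma aux_pigeon {m n : ℕ} (hm : 2 ≤ m) (A : Finset (Fin n → Fin m))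
    (h : (m - 1) ^ n < A.card) :
    ∃ j : Fin n, ∀ v : Fin m, ∃ ξ ∈ A, ξ j = v := by
  by_contra h'
  push_neg at h'
  choose v hv using h'
  have hsub : A ⊆ Fintype.piFinset (fun j => Finset.univ.erase (v j)) := by
    intro ξ hξ
    rw [Fintype.mem_piFinset]
    intro j
    exact Finset.mem_erase.2 ⟨hv j ξ hξ, Finset.mem_univ _⟩
  have hcard := Finset.card_le_card hsub
  rw [Fintype.card_piFinset] at hcard
  simp only [Finset.card_erase_of_mem (Finset.mem_univ _), Finset.card_univ,
    Fintype.card_fin, Finset.prod_const, Finset.card_univ, Fintype.card_fin] at hcard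
  omega

/-- Pigeonhole step: if fewer than `(m/(m-1))^n` sets cover `m^n` distinct points `z_ξ`
indexed by `ξ : {0,…,n-1} → {1,…,m}`, then some covering set contains points whose
indices realize all `m` values at some coordinate `j`. -/
theorem stmt_13 {Y : Type*} (m n : ℕ) (hm : 2 ≤ m) (hn : 1 ≤ n)
    (U : Finset (Set Y))
    (z : (Fin n → Fin m) → Y) (hz : Function.Injective z)
    (hcover : ∀ ξ : Fin n → Fin m, ∃ V ∈ U, z ξ ∈ V)
    (hcard : (U.card : ℝ) < ((m : ℝ) / ((m : ℝ) - 1)) ^ n) :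
    ∃ V ∈ U, ∃ j : Fin n, ∃ ξ : Fin m → (Fin n → Fin m),
      (∀ s : Fin m, z (ξ s) ∈ V) ∧
      Function.Surjective (fun s : Fin m => ξ s j) := by
  classical
  choose V hVU hVz using hcover
  have hm1 : (0 : ℝ) < (m : ℝ) - 1 := by
    have : (2 : ℝ) ≤ (m : ℝ) := by exact_mod_cast hm
    linarith
  -- derive the ℕ inequality U.card * (m-1)^n < m^n
  have hnat : U.card * (m - 1) ^ n < m ^ n := by
    have hR : (U.card : ℝ) * ((m : ℝ) - 1) ^ n < (m : ℝ) ^ n := by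
      have := mul_lt_mul_of_pos_right hcard (pow_pos hm1 n)
      rwa [div_pow, div_mul_cancel₀] at this
      exact (pow_pos hm1 n).ne'
    have hcast : ((m : ℝ) - 1) = ((m - 1 : ℕ) : ℝ) := by
      rw [Nat.cast_sub (by omega)]; norm_num
    rw [hcast] at hR
    exact_mod_cast hR
  have hmaps : ∀ ξ ∈ (Finset.univ : Finset (Fin n → Fin m)), V ξ ∈ U :=
    fun ξ _ => hVU ξ
  have hcardu : U.card * (m - 1) ^ n < (Finset.univ : Finset (Fin n → Fin m)).card := by
    rwa [Finset.card_univ, Fintype.card_fun, Fintype.card_fin, Fintype.card_fin]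
  obtain ⟨W, hWU, hW⟩ :=
    Finset.exists_lt_card_fiber_of_mul_lt_card_of_maps_to hmaps hcardu
  obtain ⟨j, hj⟩ := aux_pigeon hm _ hW
  choose ξ hξA hξj using hj
  refine ⟨W, hWU, j, ξ, fun s => ?_, fun s => ⟨s, hξj s⟩⟩
  have := hξA s
  rw [Finset.mem_filter] at this
  rw [← this.2]
  exact hVz (ξ s)
end
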